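/- Let n ≥ 3 and m ∈ ℝ. The set of points (c_0, …, c_{n−1}) ∈ ℝⁿ for which there exists V : ℤ → ℝ² with V_{i+n} = −V_i for all i, [V_i, V_{i+1}] = 1 for all i, [V_i, V_j] > 0 for all 0 ≤ i < j ≤ n−1, c_{i mod n} = [V_{i−1}, V_{i+1}] for all i, and Σ_{i=0}^{n−1} c_i ≤ m, is a compact subset of ℝⁿ. -/

import Mathlib

/-- The standard area form on the plane: `[v,w] = v₁w₂ − v₂w₁`. -/
def areaForm (v w : ℝ × ℝ) : ℝ := v.1 * w.2 - v.2 * w.1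

open Fin.NatCast

namespace SublevelAux

def seqA (d : ℕ → ℝ) : ℕ → ℝ × ℝ
  | 0 => (1, 0)
  | 1 => (0, 1)
  | (k+2) => d (k+1) • seqA d (k+1) - seqA d k

lemma seqA_zero (d : ℕ → ℝ) : seqA d 0 = (1,0) := rfl
lemma seqA_one (d : ℕ → ℝ) : seqA d 1 = (0,1) := rfl
lemma seqA_add_two (d : ℕ → ℝ) (k : ℕ) : seqA d (k+2) = d (k+1) • seqA d (k+1) - seqA d k := rfl

lemma areaForm_self (v : ℝ × ℝ) : areaForm v v = 0 := by simp [areaForm]; ring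

lemma areaForm_swap (v w : ℝ × ℝ) : areaForm v w = - areaForm w v := by simp [areaForm]; ring

lemma areaForm_smul_smul (a b : ℝ) (v w : ℝ × ℝ) :
    areaForm (a • v) (b • w) = (a*b) * areaForm v w := by
  simp [areaForm, Prod.smul_fst, Prod.smul_snd, smul_eq_mul]; ring

lemma areaForm_neg_left (v w : ℝ × ℝ) : areaForm (-v) w = - areaForm v w := by
  simp [areaForm]; ring

lemma areaForm_neg_right (v w : ℝ × ℝ) : areaForm v (-w) = - areaForm v w := by
  simp [areaForm]; ring

lemma areaForm_smul_sub_right (v w u : ℝ × ℝ) (r : ℝ) :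
    areaForm v (r • w - u) = r * areaForm v w - areaForm v u := by
  simp [areaForm, Prod.smul_fst, Prod.smul_snd, smul_eq_mul]; ring

lemma areaForm_expand (u v w : ℝ × ℝ) (h : areaForm u v = 1) :
    w = areaForm w v • u + areaForm u w • v := by
  have h' : u.1 * v.2 - u.2 * v.1 = 1 := h
  refine Prod.ext ?_ ?_
  · show w.1 = _
    simp [areaForm, Prod.smul_fst, smul_eq_mul]
    linear_combination (-w.1) * h'
  · show w.2 = _
    simp [areaForm, Prod.smul_snd, smul_eq_mul]
    linear_combination (-w.2) * h'

lemma collinear_of_areaForm_eq_zero (v w : ℝ × ℝ) (h : areaForm v w = 0) (hv : v ≠ 0) :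
    ∃ l : ℝ, w = l • v := by
  have h' : v.1 * w.2 - v.2 * w.1 = 0 := h
  by_cases h1 : v.1 = 0
  · have h2 : v.2 ≠ 0 := by
      intro h2; exact hv (Prod.ext h1 h2)
    refine ⟨w.2 / v.2, Prod.ext ?_ ?_⟩
    · show w.1 = w.2 / v.2 * v.1
      rw [h1]
      have h3 : v.2 * w.1 = 0 := by rw [h1] at h'; linarith
      have := (mul_eq_zero.mp h3).resolve_left h2
      simp [this]
    · show w.2 = w.2 / v.2 * v.2
      field_simp
  · refine ⟨w.1 / v.1, Prod.ext ?_ ?_⟩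
    · show w.1 = w.1 / v.1 * v.1
      field_simp
    · show w.2 = w.1 / v.1 * v.2
      field_simp
      linear_combination h'


lemma seqA_det (d : ℕ → ℝ) : ∀ k : ℕ, areaForm (seqA d k) (seqA d (k+1)) = 1 := by
  intro k
  induction k with
  | zero => simp [seqA_zero, seqA_one, areaForm]
  | succ k ih =>
    rw [show k + 1 + 1 = k + 2 from rfl, seqA_add_two, areaForm_smul_sub_right,
      areaForm_self, areaForm_swap (seqA d (k+1)) (seqA d k)]
    linarith

lemma seqA_c (d : ℕ → ℝ) (k : ℕ) :
    areaForm (seqA d k) (seqA d (k+2)) = d (k+1) := by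
  rw [seqA_add_two, areaForm_smul_sub_right, areaForm_self, seqA_det]
  ring

lemma seqA_ne_zero (d : ℕ → ℝ) (k : ℕ) : seqA d k ≠ 0 := by
  intro h
  have := seqA_det d k
  rw [h] at this
  simp [areaForm] at this

lemma seqA_strict (d : ℕ → ℝ) (n : ℕ) (hn : 3 ≤ n)
    (hA : seqA d n = -(1,0))
    (H2 : ∀ i j : ℕ, i < j → j ≤ n-1 → 0 ≤ areaForm (seqA d i) (seqA d j)) :
    ∀ i j : ℕ, i < j → j ≤ n-1 → 0 < areaForm (seqA d i) (seqA d j) := by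
  intro i j hij hjn
  rcases eq_or_lt_of_le (H2 i j hij hjn) with h0 | h0
  · exfalso
    obtain ⟨l, hl⟩ := collinear_of_areaForm_eq_zero _ _ h0.symm (seqA_ne_zero d i)
    have hl0 : l ≠ 0 := by
      intro h; rw [h, zero_smul] at hl; exact seqA_ne_zero d j hl
    by_cases hj1 : j = i + 1
    · have := seqA_det d i
      rw [← hj1] at this
      rw [this] at h0
      exact absurd h0.symm one_ne_zero
    · -- j ≥ i + 2
      have hij2 : i + 2 ≤ j := by omega
      -- 1 = areaForm (A (j-1)) (A j) = -l * areaForm (A i) (A (j-1))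
      have hd1 : areaForm (seqA d (j-1)) (seqA d j) = 1 := by
        have := seqA_det d (j-1)
        rwa [show j - 1 + 1 = j by omega] at this
      have hs : 0 ≤ areaForm (seqA d i) (seqA d (j-1)) :=
        H2 i (j-1) (by omega) (by omega)
      have heq1 : l * areaForm (seqA d (j-1)) (seqA d i) = 1 := by
        rw [hl] at hd1
        rw [show areaForm (seqA d (j-1)) (l • seqA d i)
            = l * areaForm (seqA d (j-1)) (seqA d i) by
          have := areaForm_smul_smul 1 l (seqA d (j-1)) (seqA d i)
          simpa using this] at hd1
        linarith
      have hswap : areaForm (seqA d (j-1)) (seqA d i)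
          = - areaForm (seqA d i) (seqA d (j-1)) := areaForm_swap _ _
      have hlneg : l < 0 := by
        rcases lt_trichotomy l 0 with h | h | h
        · exact h
        · rw [h] at heq1; simp at heq1
        · nlinarith
      -- second relation
      have hd2 : areaForm (seqA d j) (seqA d (j+1)) = 1 := seqA_det d j
      have heq2 : l * areaForm (seqA d i) (seqA d (j+1)) = 1 := by
        rw [hl] at hd2
        rw [show areaForm (l • seqA d i) (seqA d (j+1))
            = l * areaForm (seqA d i) (seqA d (j+1)) by
          have := areaForm_smul_smul l 1 (seqA d i) (seqA d (j+1))
          simpa using this] at hd2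
        linarith
      by_cases hjn1 : j + 1 ≤ n - 1
      · have := H2 i (j+1) (by omega) hjn1
        nlinarith
      · have hj : j = n - 1 := by omega
        have hj1n : j + 1 = n := by omega
        rw [hj1n, hA] at heq2
        have hA0 : areaForm (seqA d i) (-(1,0) : ℝ × ℝ)
            = - areaForm (seqA d i) (seqA d 0) := by
          rw [seqA_zero]; exact areaForm_neg_right _ _
        rw [hA0] at heq2
        by_cases hi0 : i = 0
        · rw [hi0, areaForm_self] at heq2; simp at heq2
        · have h02 : 0 ≤ areaForm (seqA d 0) (seqA d i) :=
            H2 0 i (by omega) (by omega)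
          have := areaForm_swap (seqA d 0) (seqA d i)
          nlinarith
  · exact h0

lemma int_div_mod_eq {n q r i : ℤ} (hn : 0 < n) (h : i = n * q + r)
    (h0 : 0 ≤ r) (h1 : r < n) : i / n = q ∧ i % n = r := by
  constructor
  · rw [h, show n * q + r = r + q * n by ring,
      Int.add_mul_ediv_right _ _ (by omega : n ≠ 0),
      Int.ediv_eq_zero_of_lt h0 h1, zero_add]
  · rw [h, show n * q + r = r + q * n by ring,
      Int.add_mul_emod_self_right, Int.emod_eq_of_lt h0 h1]

def gmap (p q v : ℝ × ℝ) : ℝ × ℝ := (areaForm v q, areaForm p v)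

lemma gmap_areaForm (p q v w : ℝ × ℝ) (h : areaForm p q = 1) :
    areaForm (gmap p q v) (gmap p q w) = areaForm v w := by
  have h' : p.1 * q.2 - p.2 * q.1 = 1 := h
  simp only [gmap, areaForm]
  linear_combination (v.1 * w.2 - v.2 * w.1) * h'

lemma gmap_smul_sub (p q : ℝ × ℝ) (r : ℝ) (v w : ℝ × ℝ) :
    gmap p q (r • v - w) = r • gmap p q v - gmap p q w := by
  simp only [gmap, areaForm]
  refine Prod.ext ?_ ?_ <;>
    simp [Prod.smul_fst, Prod.smul_snd, smul_eq_mul] <;> ring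

lemma gmap_neg (p q v : ℝ × ℝ) : gmap p q (-v) = - gmap p q v := by
  simp only [gmap, areaForm]
  refine Prod.ext ?_ ?_ <;> simp <;> ring

lemma seqA_comp_continuous {α : Type*} [TopologicalSpace α]
    (f : ℕ → α → ℝ) (hf : ∀ k, Continuous (f k)) :
    ∀ k : ℕ, Continuous fun a => seqA (fun j => f j a) k := by
  intro k
  induction k using Nat.twoStepInduction with
  | zero => simp only [seqA_zero]; exact continuous_const
  | one => simp only [seqA_one]; exact continuous_const
  | more k ih1 ih2 =>
    simp only [seqA_add_two]
    exact ((hf (k+1)).smul ih2).sub ih1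


def dseq (n : ℕ) [NeZero n] (c : Fin n → ℝ) (k : ℕ) : ℝ := c (k : Fin n)

lemma dseq_periodic (n : ℕ) [NeZero n] (c : Fin n → ℝ) (k : ℕ) :
    dseq n c (k + n) = dseq n c k := by
  unfold dseq
  congr 1
  simp

lemma dseq_eq (n : ℕ) [NeZero n] (c : Fin n → ℝ) (k : ℕ) (hk : k < n) :
    dseq n c k = c ⟨k, hk⟩ := by
  unfold dseq
  congr 1
  ext
  simp [Fin.val_natCast, Nat.mod_eq_of_lt hk]

end SublevelAux


open SublevelAux

/-- **Lemma (properness of `F_n`).** For `n ≥ 3` and `m ∈ ℝ`, the set of points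
`(c 0, …, c (n−1)) ∈ ℝⁿ` which arise as the consecutive cross-products
`c i = [V (i−1), V (i+1)]` of an origin-symmetric star-shaped `2n`-gon in normalized
form (`V (i+n) = −V i`, `[V i, V (i+1)] = 1`, vertices in cyclic order) and satisfy
`∑ c i ≤ m` is a compact subset of `ℝⁿ`. -/
theorem sublevel_compact (n : ℕ) (hn : 3 ≤ n) (m : ℝ) :
    IsCompact {c : Fin n → ℝ |
      (∃ V : ℤ → ℝ × ℝ,
        (∀ i : ℤ, V (i + n) = -V i) ∧
        (∀ i : ℤ, areaForm (V i) (V (i + 1)) = 1) ∧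
        (∀ i j : ℤ, 0 ≤ i → i < j → j ≤ (n : ℤ) - 1 → 0 < areaForm (V i) (V j)) ∧
        (∀ i : Fin n, c i = areaForm (V ((i : ℤ) - 1)) (V ((i : ℤ) + 1)))) ∧
      ∑ i, c i ≤ m} := by
  haveI : NeZero n := ⟨by omega⟩
  have hn0 : (0:ℤ) < (n:ℤ) := by omega
  -- the closed reformulation
  have key : {c : Fin n → ℝ |
      (∃ V : ℤ → ℝ × ℝ,
        (∀ i : ℤ, V (i + n) = -V i) ∧
        (∀ i : ℤ, areaForm (V i) (V (i + 1)) = 1) ∧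
        (∀ i j : ℤ, 0 ≤ i → i < j → j ≤ (n : ℤ) - 1 → 0 < areaForm (V i) (V j)) ∧
        (∀ i : Fin n, c i = areaForm (V ((i : ℤ) - 1)) (V ((i : ℤ) + 1)))) ∧
      ∑ i, c i ≤ m} =
      {c : Fin n → ℝ |
        seqA (dseq n c) n = -(1,0) ∧ seqA (dseq n c) (n+1) = -(0,1) ∧
        (∀ i j : ℕ, i < j → j ≤ n-1 → 0 ≤ areaForm (seqA (dseq n c) i) (seqA (dseq n c) j)) ∧
        ∑ i, c i ≤ m} := by
    ext c
    simp only [Set.mem_setOf_eq]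
    constructor
    · rintro ⟨⟨V, h1, h2, h3, h4⟩, hsum⟩
      have h01 : areaForm (V 0) (V 1) = 1 := by simpa using h2 0
      -- the cross-products are given by c, periodically
      have hc : ∀ k : ℕ, areaForm (V ((k:ℤ) - 1)) (V ((k:ℤ) + 1)) = dseq n c k := by
        intro k
        induction k using Nat.strong_induction_on with
        | _ k ih =>
          by_cases hk : k < n
          · rw [dseq_eq n c k hk]
            exact (h4 ⟨k, hk⟩).symm
          · have e1 : (k:ℤ) - 1 = ((k - n : ℕ) : ℤ) - 1 + n := by
              push_cast [Nat.cast_sub (show n ≤ k by omega)]; ring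
            have e2 : (k:ℤ) + 1 = ((k - n : ℕ) : ℤ) + 1 + n := by
              push_cast [Nat.cast_sub (show n ≤ k by omega)]; ring
            rw [e1, e2, h1, h1, areaForm_neg_left, areaForm_neg_right, neg_neg,
              ih (k - n) (by omega)]
            conv_rhs => rw [show k = k - n + n by omega]
            rw [dseq_periodic]
      -- the recurrence
      have hrec : ∀ k : ℕ, V ((k:ℤ) + 1) = dseq n c k • V (k:ℤ) - V ((k:ℤ) - 1) := by
        intro k
        have hb : areaForm (V ((k:ℤ) - 1)) (V (k:ℤ)) = 1 := by
          simpa using h2 ((k:ℤ) - 1)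
        have hexp := areaForm_expand _ _ (V ((k:ℤ) + 1)) hb
        rw [hc k] at hexp
        rw [areaForm_swap (V ((k:ℤ) + 1)) (V (k:ℤ)), h2 (k:ℤ)] at hexp
        rw [hexp]
        module
      -- identify seqA with the normalized V
      have hAeq : ∀ k : ℕ, seqA (dseq n c) k = gmap (V 0) (V 1) (V (k:ℤ)) := by
        intro k
        induction k using Nat.twoStepInduction with
        | zero => simp [seqA_zero, gmap, h01, areaForm_self]
        | one => simp [seqA_one, gmap, h01, areaForm_self]
        | more k ih1 ih2 =>
          rw [seqA_add_two, ih2, ih1, ← gmap_smul_sub]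
          congr 1
          have h := hrec (k+1)
          push_cast at h ⊢
          rw [show (k:ℤ) + 1 + 1 = (k:ℤ) + 2 by ring, show (k:ℤ) + 1 - 1 = (k:ℤ) by ring] at h
          exact h.symm
      have hg0 : gmap (V 0) (V 1) (V 0) = ((1:ℝ),(0:ℝ)) := by
        simp [gmap, h01, areaForm_self]
      have hg1 : gmap (V 0) (V 1) (V 1) = ((0:ℝ),(1:ℝ)) := by
        simp [gmap, h01, areaForm_self]
      refine ⟨?_, ?_, ?_, hsum⟩
      · have hVn : V ((n:ℕ):ℤ) = -V 0 := by simpa using h1 0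
        rw [hAeq n, hVn, gmap_neg, hg0]
      · have hVn1 : V (((n+1:ℕ)):ℤ) = -V 1 := by
          push_cast
          rw [add_comm]
          exact h1 1
        rw [hAeq (n+1), hVn1, gmap_neg, hg1]
      · intro i j hij hjn
        rw [hAeq i, hAeq j, gmap_areaForm _ _ _ _ h01]
        exact le_of_lt (h3 i j (by omega) (by exact_mod_cast hij) (by omega))
    · rintro ⟨hA1, hA2, hpos, hsum⟩
      have hstrict := seqA_strict (dseq n c) n hn hA1 hpos
      set V : ℤ → ℝ × ℝ :=
        fun i => ((-1:ℝ)^(i / (n:ℤ))) • seqA (dseq n c) (i % (n:ℤ)).toNat with hVdef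
      have hVq : ∀ i q r : ℤ, i = n*q + r → 0 ≤ r → r < n →
          V i = ((-1:ℝ)^q) • seqA (dseq n c) r.toNat := by
        intro i q r h hr0 hr1
        obtain ⟨e1, e2⟩ := int_div_mod_eq hn0 h hr0 hr1
        rw [hVdef]
        simp only
        rw [e1, e2]
      refine ⟨⟨V, ?_, ?_, ?_, ?_⟩, hsum⟩
      · intro i
        have hi := Int.mul_ediv_add_emod i n
        have hr0 : 0 ≤ i % n := Int.emod_nonneg i (by omega)
        have hr1 : i % n < n := Int.emod_lt_of_pos i hn0
        rw [hVq i (i/(n:ℤ)) (i % n) (by omega) hr0 hr1,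
          hVq (i+n) (i/(n:ℤ)+1) (i % n) (by rw [mul_add, mul_one]; omega) hr0 hr1,
          zpow_add_one₀ (by norm_num : (-1:ℝ) ≠ 0), mul_comm, mul_smul, neg_one_smul]
      · intro i
        have hi := Int.mul_ediv_add_emod i n
        have hr0 : 0 ≤ i % n := Int.emod_nonneg i (by omega)
        have hr1 : i % n < n := Int.emod_lt_of_pos i hn0
        by_cases hrtop : i % n = n - 1
        · rw [hVq i (i/(n:ℤ)) (i % n) (by omega) hr0 hr1,
            hVq (i+1) (i/(n:ℤ)+1) 0 (by rw [mul_add, mul_one]; omega) le_rfl hn0,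
            areaForm_smul_smul]
          have hcoef : ((-1:ℝ)^(i/(n:ℤ))) * ((-1:ℝ)^(i/(n:ℤ)+1)) = -1 := by
            rw [zpow_add_one₀ (by norm_num : (-1:ℝ) ≠ 0), ← mul_assoc, ← mul_zpow]
            norm_num
          rw [hcoef, hrtop, show ((n:ℤ)-1).toNat = n - 1 by omega,
            show (0:ℤ).toNat = 0 from rfl, seqA_zero]
          have hdet := seqA_det (dseq n c) (n-1)
          rw [show n - 1 + 1 = n by omega, hA1, areaForm_neg_right] at hdet
          linarith
        · rw [hVq i (i/(n:ℤ)) (i % n) (by omega) hr0 hr1,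
            hVq (i+1) (i/(n:ℤ)) (i % n + 1) (by omega) (by omega) (by omega),
            areaForm_smul_smul, ← mul_zpow]
          rw [show (i % (n:ℤ) + 1).toNat = (i % (n:ℤ)).toNat + 1 by omega, seqA_det]
          norm_num
      · intro i j hi hij hjn
        rw [hVq i 0 i (by ring) hi (by omega),
          hVq j 0 j (by ring) (by omega) (by omega),
          zpow_zero, one_smul, one_smul]
        exact hstrict i.toNat j.toNat (by omega) (by omega)
      · intro i
        have hk : (i:ℤ) = (i.val:ℤ) := rfl
        have hkn : i.val < n := i.isLt
        rw [hk]
        by_cases hk0 : i.val = 0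
        · have e1 : ((i.val:ℕ):ℤ) - 1 = -1 := by omega
          have e2 : ((i.val:ℕ):ℤ) + 1 = 1 := by omega
          rw [e1, e2,
            hVq (-1) (-1) ((n:ℤ)-1) (by omega) (by omega) (by omega),
            hVq 1 0 1 (by omega) (by omega) (by omega),
            zpow_zero, one_smul,
            show ((-1:ℝ))^(-1:ℤ) = -1 by norm_num,
            neg_one_smul, areaForm_neg_left,
            show ((n:ℤ)-1).toNat = n-1 by omega,
            show (1:ℤ).toNat = 1 from rfl, seqA_one]
          have hc2 := seqA_c (dseq n c) (n-1)
          rw [show n-1+2 = n+1 by omega, show n-1+1 = n by omega, hA2,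
            areaForm_neg_right] at hc2
          have hdn : dseq n c n = c i := by
            have hi0 : i = 0 := by ext; simp [hk0]
            rw [hi0]
            show c ((n:ℕ):Fin n) = c 0
            rw [Fin.natCast_self]
          linarith
        · by_cases hklast : i.val = n-1
          · have e1 : ((i.val:ℕ):ℤ) - 1 = (n:ℤ) - 2 := by omega
            have e2 : ((i.val:ℕ):ℤ) + 1 = (n:ℤ) := by omega
            rw [e1, e2,
              hVq ((n:ℤ)-2) 0 ((n:ℤ)-2) (by ring) (by omega) (by omega),
              hVq (n:ℤ) 1 0 (by omega) le_rfl hn0,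
              zpow_zero, one_smul, zpow_one, neg_one_smul,
              show ((n:ℤ)-2).toNat = n-2 by omega,
              show (0:ℤ).toNat = 0 from rfl, seqA_zero, ← hA1]
            have hc2 := seqA_c (dseq n c) (n-2)
            rw [show n-2+2 = n by omega, show n-2+1 = n-1 by omega] at hc2
            rw [hc2]
            show c i = c ((n-1:ℕ) : Fin n)
            rw [← hklast, Fin.cast_val_eq_self]
          · rw [hVq ((i.val:ℤ)-1) 0 ((i.val:ℤ)-1) (by ring) (by omega) (by omega),
              hVq ((i.val:ℤ)+1) 0 ((i.val:ℤ)+1) (by ring) (by omega) (by omega),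
              zpow_zero, one_smul, one_smul,
              show ((i.val:ℤ)-1).toNat = i.val - 1 by omega,
              show ((i.val:ℤ)+1).toNat = i.val + 1 by omega]
            have hc2 := seqA_c (dseq n c) (i.val - 1)
            rw [show i.val - 1 + 2 = i.val + 1 by omega,
              show i.val - 1 + 1 = i.val by omega] at hc2
            rw [hc2]
            show c i = c ((i.val:ℕ) : Fin n)
            rw [Fin.cast_val_eq_self]
  rw [key]
  -- continuity of c ↦ seqA (dseq n c) k
  have hcont : ∀ k : ℕ, Continuous fun c : Fin n → ℝ => seqA (dseq n c) k := by
    intro k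
    exact seqA_comp_continuous (fun j (c : Fin n → ℝ) => c ((j:ℕ) : Fin n))
      (fun j => continuous_apply _) k
  apply IsCompact.of_isClosed_subset (isCompact_Icc (a := (0 : Fin n → ℝ)) (b := fun _ => m))
  · -- closedness
    simp only [Set.setOf_and]
    refine IsClosed.inter (isClosed_eq (hcont n) continuous_const)
      (IsClosed.inter (isClosed_eq (hcont (n+1)) continuous_const)
        (IsClosed.inter ?_
          (isClosed_le (continuous_finset_sum _ (fun i _ => continuous_apply i))
            continuous_const)))
    simp only [Set.setOf_forall]
    refine isClosed_iInter fun i => isClosed_iInter fun j =>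
      isClosed_iInter fun _ => isClosed_iInter fun _ => ?_
    exact isClosed_le continuous_const
      (((hcont i).fst.mul (hcont j).snd).sub ((hcont i).snd.mul (hcont j).fst))
  · -- boundedness
    rintro c ⟨hA1, hA2, hpos, hsum⟩
    have hstrict := seqA_strict (dseq n c) n hn hA1 hpos
    have hposc : ∀ i : Fin n, 0 < c i := by
      intro i
      have hkn : i.val < n := i.isLt
      by_cases hk0 : i.val = 0
      · have hi0 : i = 0 := by ext; simp [hk0]
        have hc2 := seqA_c (dseq n c) (n-1)
        rw [show n-1+2 = n+1 by omega, show n-1+1 = n by omega, hA2,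
          areaForm_neg_right, ← seqA_one (dseq n c)] at hc2
        have hdn : dseq n c n = c i := by
          rw [hi0]
          show c ((n:ℕ):Fin n) = c 0
          rw [Fin.natCast_self]
        have hs := hstrict 1 (n-1) (by omega) (by omega)
        rw [areaForm_swap] at hs
        linarith
      · by_cases hklast : i.val = n-1
        · have hc2 := seqA_c (dseq n c) (n-2)
          rw [show n-2+2 = n by omega, show n-2+1 = n-1 by omega, hA1,
            areaForm_neg_right, ← seqA_zero (dseq n c)] at hc2
          have hdn : dseq n c (n-1) = c i := by
            rw [← hklast]
            show c ((i.val:ℕ) : Fin n) = c i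
            rw [Fin.cast_val_eq_self]
          have hs := hstrict 0 (n-2) (by omega) (by omega)
          rw [areaForm_swap] at hs
          linarith
        · have hc2 := seqA_c (dseq n c) (i.val-1)
          rw [show i.val-1+2 = i.val+1 by omega,
            show i.val-1+1 = i.val by omega] at hc2
          have hdn : dseq n c i.val = c i := by
            show c ((i.val:ℕ) : Fin n) = c i
            rw [Fin.cast_val_eq_self]
          have hs := hstrict (i.val-1) (i.val+1) (by omega) (by omega)
          linarith
    constructor
    · intro i
      exact le_of_lt (hposc i)
    · intro i
      calc c i ≤ ∑ j, c j :=
            Finset.single_le_sum (fun j _ => le_of_lt (hposc j)) (Finset.mem_univ i)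
        _ ≤ m := hsum
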